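/- arXiv:2302.03643 — 5 statements merged into one kernel-verified Lean document; each statement's English description precedes it below -/
import Mathlib

section
/- Let α be a snowy weak composition. Then for every r ≥ 1, rajcode(α)_r = α_r + |{r' > r : α_r < α_{r'}}|. -/
open scoped Classical

noncomputable section

/-- A weak composition: a finitely supported sequence of naturals.  Indices are
thought of as positive integers; index `0` is required to satisfy `α 0 = 0`. -/
abbrev WeakComp := ℕ →₀ ℕ

/-- A weak composition is snowy if its positive entries are pairwise distinct. -/
def Snowy (α : WeakComp) : Prop :=
  ∀ r r', 0 < α r → α r = α r' → r = r'

/-- The key diagram of a weak composition: the left-justified diagram with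
`α r` cells in row `r` (columns `1, …, α r`). -/
def keyDiagram (α : WeakComp) : Finset (ℕ × ℕ) :=
  α.support.biUnion fun r => (Finset.Icc 1 (α r)).image fun c => (r, c)

/-- Largest row index occurring in a diagram. -/
def rowBound (D : Finset (ℕ × ℕ)) : ℕ := (D.image Prod.fst).sup id

/-- One step of the snow-diagram algorithm: in row `r`, mark as a dark cloud the
rightmost cell of `D` whose column contains no dark cloud of `S` yet. -/
def darkStep (D S : Finset (ℕ × ℕ)) (r : ℕ) : Finset (ℕ × ℕ) :=
  let cols := (D.filter fun p => p.1 = r ∧ ∀ q ∈ S, q.2 ≠ p.2).image Prod.snd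
  if h : cols.Nonempty then insert (r, cols.max' h) S else S

/-- Process rows `N, N-1, …, N-k+1` from bottom to top. -/
def darkAux (D : Finset (ℕ × ℕ)) (N : ℕ) : ℕ → Finset (ℕ × ℕ)
  | 0 => ∅
  | k + 1 => darkStep D (darkAux D N k) (N - k)

/-- The dark cloud diagram of a diagram `D`: iterate the rows of `D` from bottom
to top, marking in each row the rightmost cell whose column contains no dark
cloud from a lower row. -/
def dark (D : Finset (ℕ × ℕ)) : Finset (ℕ × ℕ) := darkAux D (rowBound D) (rowBound D)

/-- The underlying diagram of the snow diagram of `D`: the cells of `D` together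
with all (snowflake) positions above a dark cloud in its column. -/
def snow (D : Finset (ℕ × ℕ)) : Finset (ℕ × ℕ) :=
  D ∪ (dark D).biUnion fun p => (Finset.Icc 1 p.1).image fun r => (r, p.2)

/-- `rajcode` of a diagram: the number of cells in row `r` of its snow diagram. -/
def rajcodeD (D : Finset (ℕ × ℕ)) (r : ℕ) : ℕ :=
  ((snow D).filter fun p => p.1 = r).card

/-- `raj` of a diagram: the total number of cells of its snow diagram. -/
def rajD (D : Finset (ℕ × ℕ)) : ℕ := (snow D).card

/-- `rajcode` of a weak composition. -/
def rajcode (α : WeakComp) (r : ℕ) : ℕ := rajcodeD (keyDiagram α) r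

/-- `raj` of a weak composition. -/
def raj (α : WeakComp) : ℕ := rajD (keyDiagram α)

/-- Non-attacking rook diagram: a finite subset of `ℤ_{>0} × ℤ_{>0}` with at
most one cell in each row and at most one cell in each column. -/
def IsRook (R : Finset (ℕ × ℕ)) : Prop :=
  (∀ p ∈ R, 1 ≤ p.1 ∧ 1 ≤ p.2) ∧
    ∀ p ∈ R, ∀ q ∈ R, (p.1 = q.1 ∨ p.2 = q.2) → p = q

/-- The sum `|α|` of the entries of a weak composition. -/
def wsum (α : WeakComp) : ℕ := α.sum fun _ v => v

/-- The number of pairs `(r, r')` with `1 ≤ r < r'` and `α r < α r'`. -/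
def invCount (α : WeakComp) : ℕ :=
  ((Finset.Icc 1 (α.support.sup id) ×ˢ α.support).filter fun p =>
      p.1 < p.2 ∧ α p.1 < α p.2).card

/-- Swap entries `i` and `i+1` of a weak composition. -/
def swapEntries (i : ℕ) (α : WeakComp) : WeakComp :=
  Finsupp.equivMapDomain (Equiv.swap i (i + 1)) α

/-- The Rothe diagram of `w ∈ S_n`, in 1-based coordinates:
`{(r, w(r')) : r < r', w(r) > w(r')}`. -/
def rothe {n : ℕ} (w : Equiv.Perm (Fin n)) : Finset (ℕ × ℕ) :=
  (Finset.univ.filter fun p : Fin n × Fin n => p.1 < p.2 ∧ w p.2 < w p.1).image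
    fun p => ((p.1 : ℕ) + 1, (w p.2 : ℕ) + 1)

/-- Length of the longest increasing subsequence of `w` starting at position `r`
(equivalently, starting with the value `w r`). -/
def LISfrom {n : ℕ} (w : Equiv.Perm (Fin n)) (r : Fin n) : ℕ :=
  Finset.sup (Finset.univ.filter fun s : Finset (Fin n) =>
      r ∈ s ∧ (∀ i ∈ s, r ≤ i) ∧ ∀ i ∈ s, ∀ j ∈ s, i < j → w i < w j)
    Finset.card

/-- Insert `x` into a strictly decreasing row: replace the largest entry `< x`
(returning it as bumped), or append `x` at the end. -/
def insertRow : List ℕ → ℕ → List ℕ × Option ℕ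
  | [], x => ([x], none)
  | a :: t, x =>
      if a < x then (x :: t, some a)
      else (a :: (insertRow t x).1, (insertRow t x).2)

/-- The 1-based value of `w` at 0-based position `i` (0 if out of range). -/
def oneline {n : ℕ} (w : Equiv.Perm (Fin n)) (i : ℕ) : ℕ :=
  if h : i < n then (w ⟨i, h⟩ : ℕ) + 1 else 0

/-- Row one of the Schensted insertion tableau after the first `k` insertions of
the values `w(n), w(n-1), …` (1-based values, inserted from the last position). -/
def rowOneAux {n : ℕ} (w : Equiv.Perm (Fin n)) : ℕ → List ℕ
  | 0 => []
  | k + 1 => (insertRow (rowOneAux w k) (oneline w (n - 1 - k))).1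

/-- The value bumped from row one when the value `w r` is inserted (during the
Schensted insertion of `w(n), …, w(1)` into the empty tableau); `none` if `w r`
is appended at the end of row one. -/
def bumpedFromRowOne {n : ℕ} (w : Equiv.Perm (Fin n)) (r : Fin n) : Option ℕ :=
  (insertRow (rowOneAux w (n - 1 - (r : ℕ))) (oneline w (r : ℕ))).2

/-- Position `i` starts a maximal decreasing run of `u` (in one-line notation). -/
def IsRunStart {n : ℕ} (u : Equiv.Perm (Fin n)) (i : Fin n) : Prop :=
  ∀ j : Fin n, (j : ℕ) + 1 = (i : ℕ) → u j < u i

/-- A fireworks permutation: the initial elements of its maximal decreasing runs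
are increasing. -/
def Fireworks {n : ℕ} (u : Equiv.Perm (Fin n)) : Prop :=
  ∀ i j : Fin n, IsRunStart u i → IsRunStart u j → i < j → u i < u j

/-- An inverse fireworks permutation. -/
def InverseFireworks {n : ℕ} (w : Equiv.Perm (Fin n)) : Prop := Fireworks w⁻¹

/-- The `n`-th Bell number: the number of set partitions (equivalence relations)
of an `n`-element set. -/
def bell (n : ℕ) : ℕ := Nat.card (Setoid (Fin n))

/-- The staircase board `Stair_n = {(r,c) : 1 ≤ r ≤ n-1, 1 ≤ c ≤ n-r}`. -/
def stair (n : ℕ) : Finset (ℕ × ℕ) :=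
  (Finset.Icc 1 n ×ˢ Finset.Icc 1 n).filter fun p => p.1 ≤ n - 1 ∧ p.2 ≤ n - p.1

/-- All cells weakly above a rook of `R` in its column, or weakly to the left of
a rook of `R` in its row. -/
def hooks (R : Finset (ℕ × ℕ)) : Finset (ℕ × ℕ) :=
  R.biUnion fun p =>
    ((Finset.Icc 1 p.1).image fun r => (r, p.2)) ∪
      ((Finset.Icc 1 p.2).image fun c => (p.1, c))

/-- The Northwest number `NW(R)`. -/
def NW (R : Finset (ℕ × ℕ)) : ℕ := (hooks R).card

/-- The Garsia–Remmel statistic: the number of cells of `Stair_n` that are not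
weakly above a rook in its column and not weakly to the left of a rook in its
row. -/
def GRcount (n : ℕ) (R : Finset (ℕ × ℕ)) : ℕ :=
  ((stair n).filter fun q =>
      ¬ ∃ p ∈ R, (p.2 = q.2 ∧ q.1 ≤ p.1) ∨ (p.1 = q.1 ∧ q.2 ≤ p.2)).card

/-- Garsia–Remmel `q`-Stirling numbers of the second kind. -/
def qStirling : ℕ → ℕ → Polynomial ℤ
  | 0, 0 => 1
  | 0, _ + 1 => 0
  | _ + 1, 0 => 0
  | n + 1, k + 1 =>
      Polynomial.X ^ k * qStirling n k +
        (∑ i ∈ Finset.range (k + 1), Polynomial.X ^ i) * qStirling n (k + 1)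

/-- The `q`-Bell polynomial `B_n(q) = Σ_{k=0}^n S_{n,k}(q)`. -/
def qBell (n : ℕ) : Polynomial ℤ := ∑ k ∈ Finset.range (n + 1), qStirling n k

/-- Tail lexicographic order on exponent vectors: `γ < α` iff there is `k` with
`γ k < α k` and `γ j = α j` for all `j > k`. -/
def TailLt (γ α : ℕ →₀ ℕ) : Prop :=
  ∃ k, γ k < α k ∧ ∀ j, k < j → γ j = α j

/-! For snowy `α` the dark clouds of the key diagram are exactly the last cells `(s, α s)` of the
nonzero rows: processing the rows from the bottom, the column `α s` of row `s` is never already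
clouded, because the clouds below it sit in the columns `α s'` with `s' > s`, all different from
`α s`. Row `r` of the snow diagram therefore consists of the columns `1, …, α r` together with the
columns `α r'` of the clouds below it lying to the right of `α r`, which are pairwise distinct. -/

lemma mem_keyDiagram {α : WeakComp} {p : ℕ × ℕ} :
    p ∈ keyDiagram α ↔ 1 ≤ p.2 ∧ p.2 ≤ α p.1 := by
  simp only [keyDiagram, Finset.mem_biUnion, Finset.mem_image, Finset.mem_Icc,
    Finsupp.mem_support_iff]
  constructor
  · rintro ⟨s, -, c, hc, rfl⟩
    exact hc
  · intro hp
    exact ⟨p.1, by omega, p.2, hp, rfl⟩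

lemma le_rowBound_keyDiagram {α : WeakComp} {s : ℕ} (hs : s ∈ α.support) :
    s ≤ rowBound (keyDiagram α) := by
  have hmem : (s, α s) ∈ keyDiagram α :=
    mem_keyDiagram.2 ⟨Nat.one_le_iff_ne_zero.2 (Finsupp.mem_support_iff.1 hs), le_rfl⟩
  exact Finset.le_sup (f := id) (Finset.mem_image_of_mem Prod.fst hmem)

lemma Snowy.injOn {α : WeakComp} (hs : Snowy α) : Set.InjOn α α.support := fun s hs' _ _ h =>
  hs s _ (Nat.pos_of_ne_zero (Finsupp.mem_support_iff.1 hs')) h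

lemma darkStep_keyDiagram_of_eq_zero {α : WeakComp} {r : ℕ} (S : Finset (ℕ × ℕ))
    (hr : α r = 0) : darkStep (keyDiagram α) S r = S := by
  refine dif_neg ?_
  rintro ⟨c, hc⟩
  simp only [Finset.mem_image, Finset.mem_filter, mem_keyDiagram] at hc
  obtain ⟨p, ⟨⟨h1, h2⟩, rfl, -⟩, rfl⟩ := hc
  omega

lemma darkStep_keyDiagram_of_pos {α : WeakComp} {r : ℕ} {S : Finset (ℕ × ℕ)}
    (hr : 0 < α r) (hS : ∀ q ∈ S, q.2 ≠ α r) :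
    darkStep (keyDiagram α) S r = insert (r, α r) S := by
  simp only [darkStep]
  split
  case isTrue hcols =>
    congr 2
    refine le_antisymm (Finset.max'_le _ _ _ fun c hc => ?_) (Finset.le_max' _ _ ?_)
    · simp only [Finset.mem_image, Finset.mem_filter, mem_keyDiagram] at hc
      obtain ⟨p, ⟨⟨-, hp⟩, rfl, -⟩, rfl⟩ := hc
      exact hp
    · simp only [Finset.mem_image, Finset.mem_filter, mem_keyDiagram]
      exact ⟨(r, α r), ⟨⟨hr, le_rfl⟩, rfl, hS⟩, rfl⟩
  case isFalse hcols =>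
    refine absurd ⟨α r, ?_⟩ hcols
    simp only [Finset.mem_image, Finset.mem_filter, mem_keyDiagram]
    exact ⟨(r, α r), ⟨⟨hr, le_rfl⟩, rfl, hS⟩, rfl⟩

def keyClouds (α : WeakComp) (t : ℕ) : Finset (ℕ × ℕ) :=
  (α.support.filter fun s => t < s).image fun s => (s, α s)

lemma darkStep_keyClouds {α : WeakComp} (hs : Snowy α) (t : ℕ) :
    darkStep (keyDiagram α) (keyClouds α (t + 1)) (t + 1) = keyClouds α t := by
  rcases Nat.eq_zero_or_pos (α (t + 1)) with hzero | hpos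
  · rw [darkStep_keyDiagram_of_eq_zero _ hzero, keyClouds, keyClouds]
    congr 1
    ext s
    simp only [Finset.mem_filter, Finsupp.mem_support_iff]
    constructor
    · rintro ⟨hs, hlt⟩
      exact ⟨hs, by omega⟩
    · rintro ⟨hs, hlt⟩
      exact ⟨hs, lt_of_le_of_ne hlt fun h => hs (h ▸ hzero)⟩
  · have hfree : ∀ q ∈ keyClouds α (t + 1), q.2 ≠ α (t + 1) := by
      simp only [keyClouds, Finset.mem_image, Finset.mem_filter]
      rintro _ ⟨s, ⟨-, hlt⟩, rfl⟩ heq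
      exact hlt.ne (hs _ _ hpos heq.symm)
    rw [darkStep_keyDiagram_of_pos hpos hfree]
    ext p
    simp only [keyClouds, Finset.mem_insert, Finset.mem_image, Finset.mem_filter,
      Finsupp.mem_support_iff]
    constructor
    · rintro (rfl | ⟨s, ⟨hs, hlt⟩, rfl⟩)
      · exact ⟨t + 1, ⟨hpos.ne', by omega⟩, rfl⟩
      · exact ⟨s, ⟨hs, by omega⟩, rfl⟩
    · rintro ⟨s, ⟨hs, hlt⟩, rfl⟩
      rcases (Nat.succ_le_of_lt hlt).eq_or_lt with rfl | hlt'
      · exact Or.inl rfl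
      · exact Or.inr ⟨s, ⟨hs, hlt'⟩, rfl⟩

lemma darkAux_keyDiagram {α : WeakComp} (hs : Snowy α) {N : ℕ}
    (hN : ∀ s ∈ α.support, s ≤ N) {k : ℕ} (hk : k ≤ N) :
    darkAux (keyDiagram α) N k = keyClouds α (N - k) := by
  induction k with
  | zero =>
    refine (Finset.image_eq_empty.2 (Finset.filter_eq_empty_iff.2 fun s hs' => ?_)).symm
    exact not_lt.2 (hN s hs')
  | succ k ih =>
    have hrow : N - k = N - (k + 1) + 1 := by omega
    rw [darkAux, ih (by omega), hrow, darkStep_keyClouds hs]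

lemma dark_keyDiagram {α : WeakComp} (hs : Snowy α) : dark (keyDiagram α) = keyClouds α 0 := by
  rw [dark, darkAux_keyDiagram hs (fun _ => le_rowBound_keyDiagram) le_rfl, Nat.sub_self]

lemma mem_snow_keyDiagram {α : WeakComp} (hs : Snowy α) {p : ℕ × ℕ} :
    p ∈ snow (keyDiagram α) ↔
      (1 ≤ p.2 ∧ p.2 ≤ α p.1) ∨ ∃ s ∈ α.support, 1 ≤ p.1 ∧ p.1 ≤ s ∧ p.2 = α s := by
  rw [snow, Finset.mem_union, mem_keyDiagram, dark_keyDiagram hs]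
  refine or_congr Iff.rfl ?_
  simp only [keyClouds, Finset.mem_biUnion, Finset.mem_image, Finset.mem_filter, Finset.mem_Icc]
  constructor
  · rintro ⟨_, ⟨s, ⟨hs', -⟩, rfl⟩, r', hr', rfl⟩
    exact ⟨s, hs', hr'.1, hr'.2, rfl⟩
  · rintro ⟨s, hs', h1, h2, hp⟩
    exact ⟨(s, α s), ⟨s, ⟨hs', by omega⟩, rfl⟩, p.1, ⟨h1, h2⟩, Prod.ext rfl hp.symm⟩

lemma filter_snow_keyDiagram_fst_eq {α : WeakComp} (hs : Snowy α) {r : ℕ} (hr : 1 ≤ r) :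
    (snow (keyDiagram α)).filter (fun p => p.1 = r) =
      (Finset.Icc 1 (α r) ∪ (α.support.filter fun r' => r < r' ∧ α r < α r').image α).image
        (Prod.mk r) := by
  ext ⟨p1, c⟩
  simp only [Finset.mem_filter, mem_snow_keyDiagram hs, Finset.mem_image, Finset.mem_union,
    Finset.mem_Icc, Finsupp.mem_support_iff, Prod.mk.injEq]
  constructor
  · rintro ⟨hc | ⟨s, hs0, -, hrs, rfl⟩, rfl⟩
    · exact ⟨c, Or.inl hc, rfl, rfl⟩
    · by_cases hle : α s ≤ α p1
      · exact ⟨α s, Or.inl ⟨Nat.pos_of_ne_zero hs0, hle⟩, rfl, rfl⟩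
      · have hne : p1 ≠ s := by rintro rfl; exact hle le_rfl
        exact ⟨α s, Or.inr ⟨s, ⟨hs0, lt_of_le_of_ne hrs hne, by omega⟩, rfl⟩, rfl, rfl⟩
  · rintro ⟨c, hc | ⟨s, ⟨hs0, hrs, -⟩, rfl⟩, rfl, rfl⟩
    · exact ⟨Or.inl hc, rfl⟩
    · exact ⟨Or.inr ⟨s, hs0, hr, hrs.le, rfl⟩, rfl⟩

theorem rajcode_of_snowy_general (α : WeakComp) (hs : Snowy α) :
    ∀ r : ℕ, 1 ≤ r →
      rajcode α r = α r + (α.support.filter fun r' => r < r' ∧ α r < α r').card := by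
  intro r hr
  set lower := α.support.filter fun r' => r < r' ∧ α r < α r'
  have hdisj : Disjoint (Finset.Icc 1 (α r)) (lower.image α) := by
    refine Finset.disjoint_left.2 fun c hc hc' => ?_
    obtain ⟨s, hs', rfl⟩ := Finset.mem_image.1 hc'
    have := (Finset.mem_filter.1 hs').2.2
    have := (Finset.mem_Icc.1 hc).2
    omega
  rw [rajcode, rajcodeD, filter_snow_keyDiagram_fst_eq hs hr,
    Finset.card_image_of_injective _ (Prod.mk_right_injective r),
    Finset.card_union_of_disjoint hdisj, Nat.card_Icc, Nat.add_sub_cancel,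
    Finset.card_image_of_injOn (hs.injOn.mono (Finset.coe_subset.2 (Finset.filter_subset _ _)))]

/-- for snowy `α`, `rajcode(α)_r = α_r + |{r' > r : α_r < α_{r'}}|`. -/
theorem rajcode_of_snowy (α : WeakComp) (h0 : α 0 = 0) (hs : Snowy α) :
    ∀ r : ℕ, 1 ≤ r →
      rajcode α r = α r + (α.support.filter fun r' => r < r' ∧ α r < α r').card :=
  rajcode_of_snowy_general α hs

end
end

section
/- For each equivalence class of the relation ∼ (where α ∼ γ iff rajcode(α) = rajcode(γ)), there is a unique snowy weak composition α in the class; moreover, if γ ∼ α and α is snowy, then γ_r ≥ α_r for all r. In other words, a snowy weak composition is the unique entry-wise minimum element in each rajcode-equivalence class. -/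
open scoped Classical

noncomputable section

/-! The dark clouds of a diagram `D` are characterised as the unique non-attacking rook
placement `R ⊆ D` covering `D`: every cell of `D` has a cell of `R` strictly below it in its
column or weakly right of it in its row. For snowy `α` the right ends `(r, α r)` of the rows of
`D(α)` form such a placement, so row `r` of `snow (D(α))` consists of the columns `1, …, α r` and
the values `α r'` with `r' > r`; in the lowest row where two snowy compositions differ, the one
with the larger entry has the larger rajcode. Conversely, reading off the dark clouds of `D(γ)`
row by row gives a snowy `β ≤ γ` with the same dark clouds, hence the same rajcode: a cell of
`D(γ)` beyond column `β r` of row `r` is not covered by a cloud in its row, so it lies above a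
dark cloud. -/

def Covers (q p : ℕ × ℕ) : Prop :=
  (q.2 = p.2 ∧ p.1 < q.1) ∨ (q.1 = p.1 ∧ p.2 ≤ q.2)

lemma darkStep_spec (D S : Finset (ℕ × ℕ)) (r : ℕ) :
    (darkStep D S r = S ∧ ∀ p ∈ D, p.1 = r → ∃ q ∈ S, q.2 = p.2) ∨
    ∃ c, darkStep D S r = insert (r, c) S ∧ (r, c) ∈ D ∧ (∀ q ∈ S, q.2 ≠ c) ∧
      ∀ p ∈ D, p.1 = r → (∀ q ∈ S, q.2 ≠ p.2) → p.2 ≤ c := by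
  unfold darkStep
  dsimp only
  split_ifs with h
  · right
    have hmax := Finset.max'_mem _ h
    simp only [Finset.mem_image, Finset.mem_filter] at hmax
    obtain ⟨p, ⟨hpD, hpr, hpfree⟩, hpc⟩ := hmax
    refine ⟨_, rfl, ?_, ?_, fun p' hp'D hp'r hp'free => ?_⟩
    · rwa [← hpc, ← hpr]
    · rwa [← hpc]
    · exact Finset.le_max' _ _ (by
        simp only [Finset.mem_image, Finset.mem_filter]
        exact ⟨p', ⟨hp'D, hp'r, hp'free⟩, rfl⟩)
  · left
    refine ⟨rfl, fun p hp hpr => ?_⟩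
    by_contra! hfree
    refine h ⟨p.2, ?_⟩
    simp only [Finset.mem_image, Finset.mem_filter]
    exact ⟨p, ⟨hp, hpr, hfree⟩, rfl⟩

section darkAux

variable {D : Finset (ℕ × ℕ)} {N : ℕ}

lemma mem_darkAux {k : ℕ} {p : ℕ × ℕ} (hk : k ≤ N) (hp : p ∈ darkAux D N k) :
    p ∈ D ∧ N - k < p.1 := by
  induction k generalizing p with
  | zero => simp [darkAux] at hp
  | succ k ih =>
    rw [darkAux] at hp
    rcases darkStep_spec D (darkAux D N k) (N - k) with ⟨h, -⟩ | ⟨c, h, hcD, -⟩ <;>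
      rw [h] at hp
    · obtain ⟨hpD, hpk⟩ := ih (by omega) hp
      exact ⟨hpD, by omega⟩
    · rcases Finset.mem_insert.1 hp with rfl | hp
      · exact ⟨hcD, by omega⟩
      · obtain ⟨hpD, hpk⟩ := ih (by omega) hp
        exact ⟨hpD, by omega⟩

lemma darkAux_nonattacking {k : ℕ} (hk : k ≤ N) :
    ∀ p ∈ darkAux D N k, ∀ q ∈ darkAux D N k, (p.1 = q.1 ∨ p.2 = q.2) → p = q := by
  induction k with
  | zero => simp [darkAux]
  | succ k ih =>
    rw [darkAux]
    rcases darkStep_spec D (darkAux D N k) (N - k) with ⟨h, -⟩ | ⟨c, h, -, hfree, -⟩ <;>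
      rw [h]
    · exact ih (by omega)
    have hnew : ∀ q ∈ darkAux D N k, q.1 ≠ N - k ∧ q.2 ≠ c := fun q hq =>
      ⟨by have := (mem_darkAux (by omega) hq).2; omega, hfree q hq⟩
    intro p hp q hq hpq
    rcases Finset.mem_insert.1 hp with rfl | hp <;> rcases Finset.mem_insert.1 hq with rfl | hq
    · rfl
    · have := hnew q hq; simp only at hpq; omega
    · have := hnew p hp; simp only at hpq; omega
    · exact ih (by omega) p hp q hq hpq

lemma exists_darkAux_covers {k : ℕ} (hk : k ≤ N) {p : ℕ × ℕ} (hp : p ∈ D)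
    (hlow : N - k < p.1) (hhigh : p.1 ≤ N) : ∃ q ∈ darkAux D N k, Covers q p := by
  induction k with
  | zero => omega
  | succ k ih =>
    rw [darkAux]
    by_cases hrow : N - k < p.1
    · obtain ⟨q, hq, hcov⟩ := ih (by omega) hrow
      rcases darkStep_spec D (darkAux D N k) (N - k) with ⟨h, -⟩ | ⟨c, h, -⟩ <;> rw [h]
      · exact ⟨q, hq, hcov⟩
      · exact ⟨q, Finset.mem_insert_of_mem hq, hcov⟩
    have hpr : p.1 = N - k := by omega
    have covers_of_col : ∀ q ∈ darkAux D N k, q.2 = p.2 → Covers q p := fun q hq hcol =>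
      Or.inl ⟨hcol, by have := (mem_darkAux (by omega) hq).2; omega⟩
    rcases darkStep_spec D (darkAux D N k) (N - k) with ⟨h, hfull⟩ | ⟨c, h, -, -, hmax⟩ <;>
      rw [h]
    · obtain ⟨q, hq, hcol⟩ := hfull p hp hpr
      exact ⟨q, hq, covers_of_col q hq hcol⟩
    by_cases hfree : ∀ q ∈ darkAux D N k, q.2 ≠ p.2
    · exact ⟨_, Finset.mem_insert_self _ _, Or.inr ⟨hpr.symm, hmax p hp hpr hfree⟩⟩
    push Not at hfree
    obtain ⟨q, hq, hcol⟩ := hfree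
    exact ⟨q, Finset.mem_insert_of_mem hq, covers_of_col q hq hcol⟩

lemma darkAux_eq_filter {R : Finset (ℕ × ℕ)} (hRD : R ⊆ D)
    (hR : ∀ p ∈ R, ∀ q ∈ R, (p.1 = q.1 ∨ p.2 = q.2) → p = q)
    (hcov : ∀ p ∈ D, ∃ q ∈ R, Covers q p) (hN : ∀ p ∈ D, p.1 ≤ N) {k : ℕ} (hk : k ≤ N) :
    darkAux D N k = R.filter (N - k < ·.1) := by
  induction k with
  | zero =>
    rw [darkAux, eq_comm, Finset.filter_eq_empty_iff]
    intro p hp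
    have := hN p (hRD hp)
    omega
  | succ k ih =>
    rw [darkAux, ih (by omega)]
    have hSfree : ∀ p ∈ R, p.1 = N - k → ∀ q ∈ R.filter (N - k < ·.1), q.2 ≠ p.2 := by
      intro p hp hpr q hq hcol
      obtain ⟨hqR, hqr⟩ := Finset.mem_filter.1 hq
      have := hR q hqR p hp (Or.inr hcol)
      subst this
      omega
    rcases darkStep_spec D (R.filter (N - k < ·.1)) (N - k) with
      ⟨h, hfull⟩ | ⟨c, h, hcD, hfree, hmax⟩ <;> rw [h]
    · ext p
      simp only [Finset.mem_filter]
      refine ⟨fun ⟨hp, hpr⟩ => ⟨hp, by omega⟩, fun ⟨hp, hpr⟩ => ⟨hp, ?_⟩⟩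
      by_contra hpr'
      obtain ⟨q, hq, hcol⟩ := hfull p (hRD hp) (by omega)
      exact hSfree p hp (by omega) q hq hcol
    · obtain ⟨q, hqR, hcovq⟩ := hcov _ hcD
      have hrow : q.1 = N - k := by
        rcases hcovq with ⟨hcol, hqr⟩ | ⟨hqr, -⟩
        · exact absurd hcol (hfree q (Finset.mem_filter.2 ⟨hqR, hqr⟩))
        · exact hqr
      have hq : q = (N - k, c) := by
        have := hmax q (hRD hqR) hrow (hSfree q hqR hrow)
        rcases hcovq with ⟨-, hqr⟩ | ⟨-, hcq⟩
        · simp only at hqr; omega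
        · exact Prod.ext hrow (by simp only at hcq ⊢; omega)
      subst hq
      ext p
      simp only [Finset.mem_insert, Finset.mem_filter]
      constructor
      · rintro (rfl | ⟨hp, hpr⟩)
        · exact ⟨hqR, by simp only; omega⟩
        · exact ⟨hp, by omega⟩
      · rintro ⟨hp, hpr⟩
        by_cases hpr' : p.1 = N - k
        · exact Or.inl (hR p hp _ hqR (Or.inl hpr'))
        · exact Or.inr ⟨hp, by omega⟩

end darkAux

section dark

variable {D : Finset (ℕ × ℕ)}

lemma row_le_rowBound {p : ℕ × ℕ} (hp : p ∈ D) : p.1 ≤ rowBound D :=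
  Finset.le_sup (f := id) (Finset.mem_image_of_mem Prod.fst hp)

lemma dark_subset : dark D ⊆ D := fun _ hp => (mem_darkAux le_rfl hp).1

lemma isRook_dark (hD : ∀ p ∈ D, 1 ≤ p.2) : IsRook (dark D) :=
  ⟨fun p hp => ⟨by have := (mem_darkAux le_rfl hp).2; omega, hD p (dark_subset hp)⟩,
    darkAux_nonattacking le_rfl⟩

lemma exists_dark_covers (hD : ∀ p ∈ D, 1 ≤ p.1) {p : ℕ × ℕ} (hp : p ∈ D) :
    ∃ q ∈ dark D, Covers q p :=
  exists_darkAux_covers le_rfl hp (by have := hD p hp; omega) (row_le_rowBound hp)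

lemma eq_dark_of_covers {R : Finset (ℕ × ℕ)} (hRD : R ⊆ D) (hR : IsRook R)
    (hcov : ∀ p ∈ D, ∃ q ∈ R, Covers q p) : R = dark D := by
  rw [dark, darkAux_eq_filter hRD hR.2 hcov (fun _ => row_le_rowBound) le_rfl, Nat.sub_self]
  exact (Finset.filter_true_of_mem fun p hp => (hR.1 p hp).1).symm

end dark

lemma one_le_of_mem_keyDiagram {α : WeakComp} (h0 : α 0 = 0) {p : ℕ × ℕ}
    (hp : p ∈ keyDiagram α) : 1 ≤ p.1 := by
  rw [mem_keyDiagram] at hp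
  by_contra! h
  rw [Nat.lt_one_iff.1 h, h0] at hp
  omega

def rowEnds (α : WeakComp) : Finset (ℕ × ℕ) := α.support.image fun r => (r, α r)

lemma mem_rowEnds {α : WeakComp} {p : ℕ × ℕ} : p ∈ rowEnds α ↔ α p.1 = p.2 ∧ 0 < p.2 := by
  simp only [rowEnds, Finset.mem_image, Finsupp.mem_support_iff]
  constructor
  · rintro ⟨r, hr, rfl⟩
    exact ⟨rfl, Nat.pos_of_ne_zero hr⟩
  · rintro ⟨h, hpos⟩
    exact ⟨p.1, by omega, by rw [h]⟩

lemma rowEnds_subset_keyDiagram (α : WeakComp) : rowEnds α ⊆ keyDiagram α := fun p hp => by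
  rw [mem_rowEnds] at hp
  exact mem_keyDiagram.2 ⟨hp.2, hp.1.ge⟩

lemma isRook_rowEnds {α : WeakComp} (h0 : α 0 = 0) (hs : Snowy α) : IsRook (rowEnds α) := by
  refine ⟨fun p hp => ⟨one_le_of_mem_keyDiagram h0 (rowEnds_subset_keyDiagram α hp),
    (mem_rowEnds.1 hp).2⟩, fun p hp q hq hpq => ?_⟩
  rw [mem_rowEnds] at hp hq
  rcases hpq with hrow | hcol
  · exact Prod.ext hrow (by rw [← hp.1, ← hq.1, hrow])
  · exact Prod.ext (hs _ _ (by omega) (by omega)) hcol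

lemma dark_keyDiagram_of_snowy {α : WeakComp} (h0 : α 0 = 0) (hs : Snowy α) :
    dark (keyDiagram α) = rowEnds α := by
  refine (eq_dark_of_covers (rowEnds_subset_keyDiagram α) (isRook_rowEnds h0 hs)
    fun p hp => ⟨(p.1, α p.1), ?_, Or.inr ⟨rfl, (mem_keyDiagram.1 hp).2⟩⟩).symm
  rw [mem_keyDiagram] at hp
  exact mem_rowEnds.2 ⟨rfl, by simp only; omega⟩

lemma mem_snow {D : Finset (ℕ × ℕ)} {p : ℕ × ℕ} :
    p ∈ snow D ↔ p ∈ D ∨ ∃ q ∈ dark D, q.2 = p.2 ∧ 1 ≤ p.1 ∧ p.1 ≤ q.1 := by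
  simp only [snow, Finset.mem_union, Finset.mem_biUnion, Finset.mem_image, Finset.mem_Icc]
  constructor
  · rintro (h | ⟨q, hq, r, hr, rfl⟩)
    · exact Or.inl h
    · exact Or.inr ⟨q, hq, rfl, hr⟩
  · rintro (h | ⟨q, hq, hcol, hr⟩)
    · exact Or.inl h
    · exact Or.inr ⟨q, hq, p.1, hr, by rw [hcol]⟩

-- Snowflakes only appear in rows `≥ 1`; a dark cloud in row `r` itself is a cell of row `r`.
lemma rajcode_eq_card (α : WeakComp) (r : ℕ) :
    rajcode α r = (Finset.Icc 1 (α r) ∪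
      ((dark (keyDiagram α)).filter fun q => 1 ≤ r ∧ r < q.1).image Prod.snd).card := by
  rw [rajcode, rajcodeD, ← Finset.card_image_of_injective _ (Prod.mk_right_injective (β := ℕ) r)]
  refine congrArg Finset.card (Finset.ext fun p => ?_)
  simp only [Finset.mem_filter, Finset.mem_image, Finset.mem_union, Finset.mem_Icc, mem_snow,
    mem_keyDiagram]
  constructor
  · rintro ⟨hp | ⟨q, hq, hcol, hr, hrq⟩, rfl⟩
    · exact ⟨p.2, Or.inl hp, rfl⟩
    refine ⟨p.2, ?_, rfl⟩
    rcases hrq.lt_or_eq with hlt | heq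
    · exact Or.inr ⟨q, ⟨hq, hr, hlt⟩, hcol⟩
    · have := mem_keyDiagram.1 (dark_subset hq)
      rw [← heq, hcol] at this
      exact Or.inl this
  · rintro ⟨c, hc | ⟨q, ⟨hq, hr, hrq⟩, hcol⟩, rfl⟩
    · exact ⟨Or.inl hc, rfl⟩
    · exact ⟨Or.inr ⟨q, hq, hcol, hr, hrq.le⟩, rfl⟩

lemma rajcode_eq_of_le_of_dark_eq {β γ : WeakComp} (hγ : γ 0 = 0) (hle : β ≤ γ)
    (hdark : dark (keyDiagram β) = dark (keyDiagram γ)) (r : ℕ) :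
    rajcode β r = rajcode γ r := by
  rw [rajcode_eq_card, rajcode_eq_card, hdark]
  refine congrArg Finset.card (subset_antisymm
    (Finset.union_subset_union (Finset.Icc_subset_Icc_right (hle r)) subset_rfl)
    (Finset.union_subset (fun c hc => ?_) Finset.subset_union_right))
  have hcell : (r, c) ∈ keyDiagram γ := mem_keyDiagram.2 (Finset.mem_Icc.1 hc)
  obtain ⟨q, hq, ⟨hcol, hrq⟩ | ⟨hrow, hcq⟩⟩ :=
    exists_dark_covers (fun _ => one_le_of_mem_keyDiagram hγ) hcell
  · refine Finset.mem_union_right _ (Finset.mem_image.2 ⟨q, ?_, hcol⟩)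
    exact Finset.mem_filter.2 ⟨hq, one_le_of_mem_keyDiagram hγ hcell, hrq⟩
  · -- a dark cloud of `γ` in row `r` is also one of `β`, so it lies within `β r` columns
    have hqβ := (mem_keyDiagram.1 (dark_subset (hdark ▸ hq))).2
    simp only at hrow hcq
    rw [hrow] at hqβ
    exact Finset.mem_union_left _ (Finset.mem_Icc.2 ⟨(Finset.mem_Icc.1 hc).1, hcq.trans hqβ⟩)

lemma card_Icc_union_lt {a b : ℕ} {A : Finset ℕ} (hab : a < b) (hb : b ∉ A) :
    (Finset.Icc 1 a ∪ A).card < (Finset.Icc 1 b ∪ A).card := by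
  refine Finset.card_lt_card (Finset.ssubset_iff_of_subset
    (Finset.union_subset_union (Finset.Icc_subset_Icc_right hab.le) subset_rfl) |>.2
    ⟨b, Finset.mem_union_left _ (Finset.mem_Icc.2 ⟨by omega, le_rfl⟩), ?_⟩)
  simp only [Finset.mem_union, Finset.mem_Icc, hb, or_false]
  omega

lemma rajcode_lt_rajcode {α β : WeakComp} (hα0 : α 0 = 0) (hβ0 : β 0 = 0) (hαs : Snowy α)
    (hβs : Snowy β) {r : ℕ} (hagree : ∀ j, r < j → α j = β j) (hlt : α r < β r) :
    rajcode α r < rajcode β r := by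
  have hbelow : (rowEnds α).filter (fun q => 1 ≤ r ∧ r < q.1) =
      (rowEnds β).filter (fun q => 1 ≤ r ∧ r < q.1) := by
    ext q
    simp only [Finset.mem_filter, mem_rowEnds]
    constructor
    · rintro ⟨⟨hq, hpos⟩, hr, hrq⟩
      exact ⟨⟨(hagree _ hrq).symm.trans hq, hpos⟩, hr, hrq⟩
    · rintro ⟨⟨hq, hpos⟩, hr, hrq⟩
      exact ⟨⟨(hagree _ hrq).trans hq, hpos⟩, hr, hrq⟩
  rw [rajcode_eq_card, rajcode_eq_card, dark_keyDiagram_of_snowy hα0 hαs,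
    dark_keyDiagram_of_snowy hβ0 hβs, hbelow]
  refine card_Icc_union_lt hlt ?_
  simp only [Finset.mem_image, Finset.mem_filter, mem_rowEnds]
  rintro ⟨q, ⟨⟨hq, -⟩, -, hrq⟩, hcol⟩
  have := hβs r q.1 (by omega) (hq.trans hcol).symm
  omega

lemma eq_of_snowy_of_rajcode_eq {α β : WeakComp} (hα0 : α 0 = 0) (hβ0 : β 0 = 0)
    (hαs : Snowy α) (hβs : Snowy β) (h : ∀ r, rajcode α r = rajcode β r) : α = β := by
  by_contra hne
  have hT : (α.neLocus β).Nonempty :=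
    Finset.nonempty_iff_ne_empty.2 (mt Finsupp.neLocus_eq_empty.1 hne)
  set r := (α.neLocus β).max' hT
  have hr : α r ≠ β r := Finsupp.mem_neLocus.1 (Finset.max'_mem _ hT)
  have hagree : ∀ j, r < j → α j = β j := fun j hj =>
    Finsupp.notMem_neLocus.1 fun hj' => (Finset.le_max' _ j hj').not_gt hj
  rcases hr.lt_or_gt with hlt | hlt
  · exact (rajcode_lt_rajcode hα0 hβ0 hαs hβs hagree hlt).ne (h r)
  · exact (rajcode_lt_rajcode hβ0 hα0 hβs hαs (fun j hj => (hagree j hj).symm) hlt).ne' (h r)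

lemma le_of_rowEnds_subset_keyDiagram {β γ : WeakComp} (h : rowEnds β ⊆ keyDiagram γ) :
    β ≤ γ := fun r => by
  rcases Nat.eq_zero_or_pos (β r) with hzero | hpos
  · exact hzero ▸ Nat.zero_le _
  · exact (mem_keyDiagram.1 (h (mem_rowEnds (p := (r, β r)) |>.2 ⟨rfl, hpos⟩))).2

def rookComp (R : Finset (ℕ × ℕ)) : WeakComp := ∑ p ∈ R, Finsupp.single p.1 p.2

section rookComp

variable {R : Finset (ℕ × ℕ)}

lemma rookComp_apply_of_mem (hR : IsRook R) {p : ℕ × ℕ} (hp : p ∈ R) : rookComp R p.1 = p.2 := by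
  rw [rookComp, Finsupp.finsetSum_apply, Finset.sum_eq_single p (fun q hq hqp => ?_)
    (absurd hp), Finsupp.single_eq_same]
  exact Finsupp.single_eq_of_ne fun hrow => hqp (hR.2 q hq p hp (Or.inl hrow.symm))

lemma rookComp_apply_eq_zero {r : ℕ} (h : ∀ p ∈ R, p.1 ≠ r) : rookComp R r = 0 := by
  rw [rookComp, Finsupp.finsetSum_apply]
  exact Finset.sum_eq_zero fun p hp => Finsupp.single_eq_of_ne (h p hp).symm

lemma rowEnds_rookComp (hR : IsRook R) : rowEnds (rookComp R) = R := by
  ext p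
  rw [mem_rowEnds]
  constructor
  · rintro ⟨hp, hpos⟩
    obtain ⟨q, hq, hrow⟩ : ∃ q ∈ R, q.1 = p.1 := by
      by_contra! hnone
      rw [rookComp_apply_eq_zero hnone] at hp
      omega
    have hcol := rookComp_apply_of_mem hR hq
    rw [hrow, hp] at hcol
    exact Prod.ext hrow.symm hcol ▸ hq
  · intro hp
    exact ⟨rookComp_apply_of_mem hR hp, (hR.1 p hp).2⟩

lemma snowy_rookComp (hR : IsRook R) : Snowy (rookComp R) := by
  intro r r' hpos heq
  have hmem : ∀ j, 0 < rookComp R j → (j, rookComp R j) ∈ R := fun j hj => by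
    simpa only [rowEnds_rookComp hR] using mem_rowEnds (p := (j, rookComp R j)) |>.2 ⟨rfl, hj⟩
  exact congrArg Prod.fst (hR.2 _ (hmem r hpos) _ (hmem r' (heq ▸ hpos)) (Or.inr heq))

lemma rookComp_zero (hR : IsRook R) : rookComp R 0 = 0 :=
  rookComp_apply_eq_zero fun p hp => Nat.one_le_iff_ne_zero.1 (hR.1 p hp).1

end rookComp

/-- each rajcode-equivalence class contains a unique snowy weak
composition, and it is the entry-wise minimum of the class. -/
theorem snowy_unique_min_in_rajcode_class (γ : WeakComp) (hγ : γ 0 = 0) :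
    (∃! α : WeakComp, α 0 = 0 ∧ Snowy α ∧ ∀ r, rajcode α r = rajcode γ r) ∧
    ∀ α : WeakComp, (α 0 = 0 ∧ Snowy α ∧ ∀ r, rajcode α r = rajcode γ r) →
      ∀ r, α r ≤ γ r := by
  have hM : IsRook (dark (keyDiagram γ)) :=
    isRook_dark fun _ hp => (mem_keyDiagram.1 hp).1
  set β := rookComp (dark (keyDiagram γ))
  have hβs : Snowy β := snowy_rookComp hM
  have hβ0 : β 0 = 0 := rookComp_zero hM
  have hle : β ≤ γ := le_of_rowEnds_subset_keyDiagram (rowEnds_rookComp hM ▸ dark_subset)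
  have hdark : dark (keyDiagram β) = dark (keyDiagram γ) := by
    rw [dark_keyDiagram_of_snowy hβ0 hβs, rowEnds_rookComp hM]
  have hraj : ∀ r, rajcode β r = rajcode γ r := rajcode_eq_of_le_of_dark_eq hγ hle hdark
  have huniq : ∀ α : WeakComp, α 0 = 0 ∧ Snowy α ∧ (∀ r, rajcode α r = rajcode γ r) → α = β :=
    fun α ⟨hα0, hαs, hα⟩ =>
      eq_of_snowy_of_rajcode_eq hα0 hβ0 hαs hβs fun r => (hα r).trans (hraj r).symm
  refine ⟨⟨β, ⟨hβ0, hβs, hraj⟩, huniq⟩, fun α hα r => ?_⟩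
  rw [huniq α hα]
  exact hle r

end
end

section
/- Let D be a diagram and (r,c) ∈ D. If no cell (r',c) with r' > r is a dark cloud of D and no cell (r,c') with c' > c is a dark cloud of D, then (r,c) is a dark cloud of D. -/
open scoped Classical

noncomputable section

/- When row `r` is processed, every dark cloud found so far lies strictly below row `r`, hence
none lies in column `c`. So `(r, c)` is a candidate, and the cloud placed in row `r` lies weakly
to the right of column `c`; as no dark cloud lies strictly to its right, it is `(r, c)` itself.
Rows are processed from index `rowBound D` down to index `1`: row `0` is never processed. -/

lemma le_rowBound {D : Finset (ℕ × ℕ)} {p : ℕ × ℕ} (hp : p ∈ D) : p.1 ≤ rowBound D :=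
  Finset.le_sup (f := id) (Finset.mem_image_of_mem Prod.fst hp)

lemma subset_darkStep (D S : Finset (ℕ × ℕ)) (r : ℕ) : S ⊆ darkStep D S r := by
  unfold darkStep
  dsimp only
  split
  · exact Finset.subset_insert _ _
  · exact subset_rfl

lemma exists_le_mem_darkStep {D S : Finset (ℕ × ℕ)} {r c : ℕ} (hrc : (r, c) ∈ D)
    (hS : ∀ q ∈ S, q.2 ≠ c) : ∃ m, c ≤ m ∧ (r, m) ∈ darkStep D S r := by
  unfold darkStep
  dsimp only
  generalize hcols : Finset.image (Prod.snd : ℕ × ℕ → ℕ) _ = cols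
  have hc : c ∈ cols := by
    rw [← hcols]
    apply Finset.mem_image_of_mem Prod.snd (a := (r, c))
    simp only [Finset.mem_filter]
    exact ⟨hrc, trivial, hS⟩
  rw [dif_pos ⟨c, hc⟩]
  exact ⟨_, cols.le_max' c hc, Finset.mem_insert_self _ _⟩

lemma darkAux_mono (D : Finset (ℕ × ℕ)) (N : ℕ) : Monotone (darkAux D N) :=
  monotone_nat_of_le_succ fun k => subset_darkStep D _ (N - k)

lemma darkAux_subset_dark {D : Finset (ℕ × ℕ)} {k : ℕ} (hk : k ≤ rowBound D) :
    darkAux D (rowBound D) k ⊆ dark D :=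
  darkAux_mono D _ hk

lemma sub_lt_fst_of_mem_darkAux {D : Finset (ℕ × ℕ)} {N k : ℕ} (hk : k ≤ N) :
    ∀ p ∈ darkAux D N k, N - k < p.1 := by
  induction k with
  | zero => simp [darkAux]
  | succ k ih =>
    intro p hp
    have ih := ih (Nat.le_of_succ_le hk)
    unfold darkAux darkStep at hp
    dsimp only at hp
    split at hp
    · rcases Finset.mem_insert.mp hp with rfl | hp
      · dsimp only; omega
      · have := ih p hp; omega
    · have := ih p hp; omega

lemma darkAux_sub_succ {D : Finset (ℕ × ℕ)} {N r : ℕ} (hr : r ≤ N) :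
    darkAux D N (N - r + 1) = darkStep D (darkAux D N (N - r)) r := by
  rw [darkAux, Nat.sub_sub_self hr]

/-- a cell of `D` with no dark cloud below it in its column and no
dark cloud to its right in its row is itself a dark cloud. -/
theorem mem_dark_of_no_dark_below_right (D : Finset (ℕ × ℕ))
    (hD : ∀ p ∈ D, 1 ≤ p.1 ∧ 1 ≤ p.2) (r c : ℕ) (hrc : (r, c) ∈ D)
    (hbelow : ∀ r', r < r' → (r', c) ∉ dark D)
    (hright : ∀ c', c < c' → (r, c') ∉ dark D) :
    (r, c) ∈ dark D := by
  have hr1 : 1 ≤ r := (hD _ hrc).1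
  have hrN : r ≤ rowBound D := le_rowBound hrc
  set S := darkAux D (rowBound D) (rowBound D - r)
  have hS : ∀ q ∈ S, q.2 ≠ c := by
    rintro q hq rfl
    have hrq : r < q.1 := by
      have := sub_lt_fst_of_mem_darkAux (Nat.sub_le _ r) q hq
      omega
    exact hbelow q.1 hrq (darkAux_subset_dark (Nat.sub_le _ r) hq)
  obtain ⟨m, hcm, hm⟩ := exists_le_mem_darkStep hrc hS
  have hmd : (r, m) ∈ dark D := by
    rw [← darkAux_sub_succ hrN] at hm
    exact darkAux_subset_dark (by omega) hm
  obtain rfl : m = c := by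
    by_contra hne
    exact hright m (lt_of_le_of_ne' hcm hne) hmd
  exact hmd

end
end

section
/- Let w ∈ S_n be a permutation, and for each q let LIS^w(q) be the length of the longest increasing subsequence of w(1),...,w(n) that starts with the value q. Then for every r ∈ [n], rajcode(RD(w))_r = n + 1 − r − LIS^w(w(r)). That is, the number of cells in row r of the snow diagram of the Rothe diagram of w equals n + 1 − r − LIS^w(w(r)). -/
open scoped Classical

noncomputable section

/-!
Call `LISfrom w i` the level of the position `i`. Positions of equal level carry decreasing
values, and from a position of level `L` one reaches, for every `ℓ ≤ L`, a position of level `ℓ`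
at or after it carrying a weakly larger value. Running the snow algorithm bottom-up on `rothe w`,
the dark cloud of row `i + 1` therefore lies in the column `w j + 1` of the next position `j > i`
of the same level as `i`, if there is one. So row `r + 1` of the snow diagram consists of the
columns `w j + 1`, `j ≥ r`, except those of the positions that come first among `j ≥ r` in their
level and have `w r ≤ w j`; there is one such position per level `1, …, LISfrom w r`.
-/

open Finset

section DarkClouds

variable {D S : Finset (ℕ × ℕ)} {r c N M : ℕ}

theorem darkStep_eq_insert (hc : (r, c) ∈ D) (hcS : ∀ q ∈ S, q.2 ≠ c)
    (hmax : ∀ c', (r, c') ∈ D → (∀ q ∈ S, q.2 ≠ c') → c' ≤ c) :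
    darkStep D S r = insert (r, c) S := by
  unfold darkStep
  dsimp only
  split_ifs with hne
  · congr 2
    refine le_antisymm (max'_le _ _ _ fun c' hc' => ?_) (le_max' _ c ?_)
    · simp only [mem_image, mem_filter] at hc'
      obtain ⟨p, ⟨hpD, rfl, hpS⟩, rfl⟩ := hc'
      exact hmax p.2 hpD hpS
    · simp only [mem_image, mem_filter]
      exact ⟨(r, c), ⟨hc, rfl, hcS⟩, rfl⟩
  · refine absurd ⟨c, ?_⟩ hne
    simp only [mem_image, mem_filter]
    exact ⟨(r, c), ⟨hc, rfl, hcS⟩, rfl⟩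

theorem darkStep_eq_self (h : ∀ c, (r, c) ∈ D → ∃ q ∈ S, q.2 = c) : darkStep D S r = S := by
  unfold darkStep
  dsimp only
  rw [dif_neg]
  rintro ⟨c, hc⟩
  simp only [mem_image, mem_filter] at hc
  obtain ⟨p, ⟨hpD, rfl, hpS⟩, rfl⟩ := hc
  obtain ⟨q, hq, hqp⟩ := h p.2 hpD
  exact hpS q hq hqp

theorem darkAux_eq_empty (hD : ∀ p ∈ D, p.1 ≤ N) : ∀ i ≤ M - N, darkAux D M i = ∅
  | 0, _ => rfl
  | i + 1, hi => by
    rw [darkAux, darkAux_eq_empty hD i (by omega)]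
    exact darkStep_eq_self fun c hc => absurd (hD _ hc) (by dsimp only; omega)

theorem darkAux_sub_add (hNM : N ≤ M) (hD : ∀ p ∈ D, p.1 ≤ N) :
    ∀ j ≤ N, darkAux D M (M - N + j) = darkAux D N j
  | 0, _ => darkAux_eq_empty hD _ le_rfl
  | j + 1, hj => by
    rw [← add_assoc, darkAux, darkAux, darkAux_sub_add hNM hD j (by omega)]
    congr 1
    omega

theorem dark_eq_darkAux (hD : ∀ p ∈ D, p.1 ≤ M) : dark D = darkAux D M M := by
  have hrow : ∀ p ∈ D, p.1 ≤ rowBound D := fun p hp =>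
    le_sup (f := id) (mem_image_of_mem Prod.fst hp)
  have hM : rowBound D ≤ M := Finset.sup_le fun _ h => by
    obtain ⟨p, hp, rfl⟩ := mem_image.mp h
    exact hD p hp
  rw [dark, ← darkAux_sub_add hM hrow _ le_rfl, Nat.sub_add_cancel hM]

end DarkClouds

section LIS

variable {n : ℕ} (w : Equiv.Perm (Fin n))

def IsIncFrom (r : Fin n) (s : Finset (Fin n)) : Prop :=
  r ∈ s ∧ (∀ i ∈ s, r ≤ i) ∧ ∀ i ∈ s, ∀ j ∈ s, i < j → w i < w j

variable {w} {i j : Fin n} {s : Finset (Fin n)}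

theorem IsIncFrom.card_le_LISfrom (h : IsIncFrom w i s) : s.card ≤ LISfrom w i :=
  le_sup (f := card) (mem_filter.mpr ⟨mem_univ s, h⟩)

theorem isIncFrom_singleton (i : Fin n) : IsIncFrom w i {i} := by
  simp [IsIncFrom]

theorem exists_isIncFrom_card_eq (w : Equiv.Perm (Fin n)) (i : Fin n) :
    ∃ s, IsIncFrom w i s ∧ s.card = LISfrom w i := by
  obtain ⟨s, hs, h⟩ := exists_mem_eq_sup (univ.filter (IsIncFrom w i))
    ⟨{i}, mem_filter.mpr ⟨mem_univ _, isIncFrom_singleton i⟩⟩ card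
  refine ⟨s, (mem_filter.mp hs).2, h.symm.trans ?_⟩
  unfold LISfrom IsIncFrom
  congr

theorem one_le_LISfrom (w : Equiv.Perm (Fin n)) (i : Fin n) : 1 ≤ LISfrom w i :=
  (isIncFrom_singleton i).card_le_LISfrom

theorem IsIncFrom.insert (h : IsIncFrom w j s) (hij : i < j) (hw : w i < w j) :
    IsIncFrom w i (insert i s) := by
  obtain ⟨hjs, hmin, hinc⟩ := h
  have hle : ∀ m ∈ s, w j ≤ w m := fun m hm =>
    (hmin m hm).eq_or_lt.elim (fun h => h ▸ le_rfl) fun h => (hinc j hjs m hm h).le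
  refine ⟨mem_insert_self i s, fun m hm => ?_, fun m hm m' hm' hmm' => ?_⟩
  · rcases mem_insert.mp hm with rfl | hm
    exacts [le_rfl, hij.le.trans (hmin m hm)]
  · rcases mem_insert.mp hm with rfl | hms
    · rcases mem_insert.mp hm' with rfl | hms'
      exacts [absurd hmm' (lt_irrefl _), hw.trans_le (hle m' hms')]
    · rcases mem_insert.mp hm' with rfl | hms'
      exacts [absurd (hmm'.trans_le (hij.le.trans (hmin m hms))) (lt_irrefl _),
        hinc m hms m' hms' hmm']

theorem LISfrom_lt_of_lt (hij : i < j) (hw : w i < w j) : LISfrom w j < LISfrom w i := by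
  obtain ⟨s, hs, hcard⟩ := exists_isIncFrom_card_eq w j
  have hi : i ∉ s := fun h => (hs.2.1 i h).not_gt hij
  have := (hs.insert hij hw).card_le_LISfrom
  rw [card_insert_of_notMem hi] at this
  omega

theorem le_of_LISfrom_eq (hij : i ≤ j) (h : LISfrom w i = LISfrom w j) : w j ≤ w i := by
  by_contra! hw
  rcases hij.eq_or_lt with rfl | hij
  · exact lt_irrefl _ hw
  · exact (LISfrom_lt_of_lt hij hw).ne h.symm

theorem exists_LISfrom_add_one_eq (h : 1 < LISfrom w i) :
    ∃ j, i < j ∧ w i < w j ∧ LISfrom w j + 1 = LISfrom w i := by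
  obtain ⟨s, ⟨his, hmin, hinc⟩, hcard⟩ := exists_isIncFrom_card_eq w i
  have hne : (s.erase i).Nonempty := by
    rw [← card_pos, card_erase_of_mem his]
    omega
  set j := (s.erase i).min' hne
  have hj : j ∈ s.erase i := min'_mem _ hne
  have hij : i < j := (hmin j (mem_of_mem_erase hj)).lt_of_ne (ne_of_mem_erase hj).symm
  have hw : w i < w j := hinc i his j (mem_of_mem_erase hj) hij
  have hjs : IsIncFrom w j (s.erase i) := ⟨hj, fun m hm => min'_le _ m hm,
    fun m hm m' hm' => hinc m (mem_of_mem_erase hm) m' (mem_of_mem_erase hm')⟩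
  have hge := hjs.card_le_LISfrom
  rw [card_erase_of_mem his] at hge
  have hlt := LISfrom_lt_of_lt hij hw
  exact ⟨j, hij, hw, by omega⟩

theorem exists_le_LISfrom_eq {ℓ : ℕ} (hℓ : 1 ≤ ℓ) (h : ℓ ≤ LISfrom w i) :
    ∃ j, i ≤ j ∧ w i ≤ w j ∧ LISfrom w j = ℓ := by
  obtain ⟨d, hd⟩ := Nat.exists_eq_add_of_le h
  induction d generalizing i with
  | zero => exact ⟨i, le_rfl, le_rfl, hd⟩
  | succ d ih =>
    obtain ⟨j, hij, hw, hj⟩ := exists_LISfrom_add_one_eq (w := w) (i := i) (by omega)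
    obtain ⟨k, hjk, hwk, hk⟩ := ih (i := j) (by omega) (by omega)
    exact ⟨k, hij.le.trans hjk, hw.le.trans hwk, hk⟩

end LIS

section Clouds

variable {n : ℕ} (w : Equiv.Perm (Fin n))

def IsLevelHead (t : ℕ) (j : Fin n) : Prop :=
  t ≤ j ∧ ∀ m : Fin n, t ≤ m → m < j → LISfrom w m ≠ LISfrom w j

variable {w} {t : ℕ} {i j f p : Fin n}

theorem IsLevelHead.eq_of_LISfrom_eq (hi : IsLevelHead w t i) (hj : IsLevelHead w t j)
    (h : LISfrom w i = LISfrom w j) : i = j := by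
  rcases lt_trichotomy i j with hij | rfl | hij
  · exact absurd h (hj.2 i hi.1 hij)
  · rfl
  · exact absurd h.symm (hi.2 j hj.1 hij)

theorem IsLevelHead.apply_le (hf : IsLevelHead w t f) (hj : t ≤ j)
    (h : LISfrom w f ≤ LISfrom w j) : w j ≤ w f := by
  obtain ⟨k, hjk, hwk, hk⟩ := exists_le_LISfrom_eq (one_le_LISfrom w f) h
  have hfk : f ≤ k := not_lt.mp fun hkf => hf.2 k (hj.trans (Fin.le_def.mp hjk)) hkf hk
  exact hwk.trans (le_of_LISfrom_eq hfk hk.symm)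

theorem exists_isLevelHead (hj : t ≤ j) {ℓ : ℕ} (hℓ : 1 ≤ ℓ) (h : ℓ ≤ LISfrom w j) :
    ∃ f, IsLevelHead w t f ∧ LISfrom w f = ℓ ∧ w j ≤ w f := by
  obtain ⟨k, hjk, hwk, hk⟩ := exists_le_LISfrom_eq hℓ h
  have htk : t ≤ k := hj.trans (Fin.le_def.mp hjk)
  obtain ⟨f, hf, hmin⟩ := exists_min_image
    (univ.filter fun m : Fin n => t ≤ m ∧ LISfrom w m = ℓ) id
    ⟨k, mem_filter.mpr ⟨mem_univ k, htk, hk⟩⟩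
  simp only [mem_filter, mem_univ, true_and, id] at hf hmin
  refine ⟨f, ⟨hf.1, fun m hm hmf hml => (hmin m ⟨hm, hml.trans hf.2⟩).not_gt hmf⟩, hf.2, ?_⟩
  exact hwk.trans (le_of_LISfrom_eq (hmin k ⟨htk, hk⟩) (hf.2.trans hk.symm))

theorem exists_isLevelHead_succ_iff :
    (∃ i : Fin n, t ≤ i ∧ LISfrom w i = LISfrom w j ∧ IsLevelHead w (i + 1) j) ↔
      t ≤ j ∧ ¬IsLevelHead w t j := by
  constructor
  · rintro ⟨i, hti, hl, hh⟩
    have hij : i < j := Fin.lt_def.mpr hh.1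
    exact ⟨hti.trans (Fin.le_def.mp hij.le), fun h => h.2 i hti hij hl⟩
  · rintro ⟨htj, hnot⟩
    simp only [IsLevelHead, htj, true_and, not_forall, not_not] at hnot
    obtain ⟨m, htm, hmj, hml⟩ := hnot
    obtain ⟨i, hi, hmax⟩ := exists_max_image
      (univ.filter fun m : Fin n => t ≤ m ∧ m < j ∧ LISfrom w m = LISfrom w j) id
      ⟨m, mem_filter.mpr ⟨mem_univ m, htm, hmj, hml⟩⟩
    simp only [mem_filter, mem_univ, true_and, id] at hi hmax
    refine ⟨i, hi.1, hi.2.2, Fin.lt_def.mp hi.2.1, fun m hm hmj hml => ?_⟩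
    have him : i < m := Fin.lt_def.mpr hm
    exact (hmax m ⟨hi.1.trans (Fin.le_def.mp him.le), hmj, hml⟩).not_gt him

theorem IsLevelHead.apply_lt_iff (hj : IsLevelHead w (p + 1) j) :
    w j < w p ↔ LISfrom w p ≤ LISfrom w j := by
  have hpj : p < j := Fin.lt_def.mpr hj.1
  constructor
  · intro hw
    by_contra! hlt
    obtain ⟨k, hpk, hwk, hk⟩ := exists_le_LISfrom_eq (one_le_LISfrom w j) hlt.le
    have hpk' : p < k := hpk.lt_of_ne (by rintro rfl; omega)
    exact (hwk.trans (hj.apply_le (Fin.lt_def.mp hpk') hk.ge)).not_gt hw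
  · intro hl
    refine lt_of_le_of_ne (not_lt.mp fun hw => ?_) (w.injective.ne hpj.ne')
    exact (LISfrom_lt_of_lt hpj hw).not_ge hl

variable (w)

/-- The cells `(i + 1, w j + 1)` with `t ≤ i` and `j` the next position after `i` of the same
level: by `dark_rothe`, the dark clouds of `rothe w` below row `t`. -/
def levelClouds (t : ℕ) : Finset (ℕ × ℕ) :=
  (univ.filter fun q : Fin n × Fin n =>
      t ≤ q.1 ∧ LISfrom w q.1 = LISfrom w q.2 ∧ IsLevelHead w (q.1 + 1) q.2).image
    fun q => ((q.1 : ℕ) + 1, (w q.2 : ℕ) + 1)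

theorem mem_levelClouds {q : ℕ × ℕ} :
    q ∈ levelClouds w t ↔ ∃ i j : Fin n,
      (t ≤ i ∧ LISfrom w i = LISfrom w j ∧ IsLevelHead w (i + 1) j) ∧
        ((i : ℕ) + 1, (w j : ℕ) + 1) = q := by
  simp [levelClouds]

theorem exists_levelClouds_snd_iff (c : ℕ) :
    (∃ q ∈ levelClouds w t, q.2 = c) ↔
      ∃ j : Fin n, t ≤ j ∧ ¬IsLevelHead w t j ∧ c = (w j : ℕ) + 1 := by
  simp only [mem_levelClouds]
  constructor
  · rintro ⟨_, ⟨i, j, hij, rfl⟩, rfl⟩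
    obtain ⟨htj, hnot⟩ := exists_isLevelHead_succ_iff.mp ⟨i, hij⟩
    exact ⟨j, htj, hnot, rfl⟩
  · rintro ⟨j, htj, hnot, rfl⟩
    obtain ⟨i, hij⟩ := exists_isLevelHead_succ_iff.mpr ⟨htj, hnot⟩
    exact ⟨_, ⟨i, j, hij, rfl⟩, rfl⟩

theorem mem_rothe_iff (i : Fin n) (c : ℕ) :
    ((i : ℕ) + 1, c) ∈ rothe w ↔ ∃ j : Fin n, i < j ∧ w j < w i ∧ c = (w j : ℕ) + 1 := by
  simp only [rothe, mem_image, mem_filter, mem_univ, true_and, Prod.exists, Prod.mk.injEq,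
    add_left_inj, Fin.val_inj]
  constructor
  · rintro ⟨a, j, hj, rfl, rfl⟩
    exact ⟨j, hj.1, hj.2, rfl⟩
  · rintro ⟨j, hij, hw, rfl⟩
    exact ⟨i, j, ⟨hij, hw⟩, rfl, rfl⟩

theorem rothe_row_le {q : ℕ × ℕ} (hq : q ∈ rothe w) : q.1 ≤ n := by
  obtain ⟨⟨i, j⟩, -, rfl⟩ := mem_image.mp hq
  exact i.isLt

theorem mem_rothe_free_iff (p : Fin n) (c : ℕ) :
    (((p : ℕ) + 1, c) ∈ rothe w ∧ ∀ q ∈ levelClouds w (p + 1), q.2 ≠ c) ↔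
      ∃ j, IsLevelHead w (p + 1) j ∧ LISfrom w p ≤ LISfrom w j ∧ c = (w j : ℕ) + 1 := by
  have hclouds := exists_levelClouds_snd_iff w (t := p + 1) c
  rw [mem_rothe_iff]
  constructor
  · rintro ⟨⟨j, hpj, hw, rfl⟩, hfree⟩
    have hj : IsLevelHead w (p + 1) j := by
      by_contra hj
      obtain ⟨q, hq, hqc⟩ := hclouds.mpr ⟨j, Fin.lt_def.mp hpj, hj, rfl⟩
      exact hfree q hq hqc
    exact ⟨j, hj, hj.apply_lt_iff.mp hw, rfl⟩
  · rintro ⟨j, hj, hl, rfl⟩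
    refine ⟨⟨j, Fin.lt_def.mpr hj.1, hj.apply_lt_iff.mpr hl, rfl⟩, fun q hq hqc => ?_⟩
    obtain ⟨k, -, hk, hkj⟩ := hclouds.mp ⟨q, hq, hqc⟩
    obtain rfl : k = j := w.injective (Fin.ext (by omega))
    exact hk hj

end Clouds

section Rothe

variable {n : ℕ} (w : Equiv.Perm (Fin n))

theorem levelClouds_eq_insert {p f : Fin n} (hf : IsLevelHead w (p + 1) f)
    (hfp : LISfrom w f = LISfrom w p) :
    levelClouds w p = insert ((p : ℕ) + 1, (w f : ℕ) + 1) (levelClouds w (p + 1)) := by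
  ext q
  simp only [mem_insert, mem_levelClouds]
  constructor
  · rintro ⟨i, j, ⟨hpi, hl, hj⟩, rfl⟩
    rcases hpi.eq_or_lt with hpi | hpi
    · obtain rfl : p = i := Fin.ext hpi
      obtain rfl : j = f := hj.eq_of_LISfrom_eq hf (hl.symm.trans hfp.symm)
      exact Or.inl rfl
    · exact Or.inr ⟨i, j, ⟨hpi, hl, hj⟩, rfl⟩
  · rintro (rfl | ⟨i, j, ⟨hpi, hl, hj⟩, rfl⟩)
    · exact ⟨p, f, ⟨le_rfl, hfp.symm, hf⟩, rfl⟩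
    · exact ⟨i, j, ⟨by omega, hl, hj⟩, rfl⟩

theorem levelClouds_eq_of_forall_ne {p : Fin n}
    (hp : ∀ f, IsLevelHead w (p + 1) f → LISfrom w f ≠ LISfrom w p) :
    levelClouds w p = levelClouds w (p + 1) := by
  ext q
  simp only [mem_levelClouds]
  constructor
  · rintro ⟨i, j, ⟨hpi, hl, hj⟩, rfl⟩
    rcases hpi.eq_or_lt with hpi | hpi
    · obtain rfl : p = i := Fin.ext hpi
      exact absurd hl.symm (hp j hj)
    · exact ⟨i, j, ⟨hpi, hl, hj⟩, rfl⟩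
  · rintro ⟨i, j, ⟨hpi, hl, hj⟩, rfl⟩
    exact ⟨i, j, ⟨by omega, hl, hj⟩, rfl⟩

theorem darkStep_rothe_levelClouds (p : Fin n) :
    darkStep (rothe w) (levelClouds w (p + 1)) (p + 1) = levelClouds w p := by
  by_cases hp : ∃ f, IsLevelHead w (p + 1) f ∧ LISfrom w f = LISfrom w p
  · obtain ⟨f, hf, hfp⟩ := hp
    obtain ⟨hfD, hfS⟩ := (mem_rothe_free_iff w p _).mpr ⟨f, hf, hfp.ge, rfl⟩
    rw [levelClouds_eq_insert w hf hfp]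
    refine darkStep_eq_insert hfD hfS fun c hc hcS => ?_
    obtain ⟨j, hj, hl, rfl⟩ := (mem_rothe_free_iff w p c).mp ⟨hc, hcS⟩
    have := hf.apply_le hj.1 (hfp.trans_le hl)
    omega
  · simp only [not_exists, not_and] at hp
    rw [levelClouds_eq_of_forall_ne w hp]
    refine darkStep_eq_self fun c hc => ?_
    by_contra! hcS
    obtain ⟨j, hj, hl, -⟩ := (mem_rothe_free_iff w p c).mp ⟨hc, hcS⟩
    obtain ⟨f, hf, hfp, -⟩ := exists_isLevelHead hj.1 (one_le_LISfrom w p) hl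
    exact hp f hf hfp

theorem darkAux_rothe : ∀ k ≤ n, darkAux (rothe w) n k = levelClouds w (n - k)
  | 0, _ => by
    refine (eq_empty_of_forall_notMem fun q hq => ?_).symm
    obtain ⟨i, -, ⟨hni, -⟩, -⟩ := (mem_levelClouds w).mp hq
    exact absurd i.isLt (by omega)
  | k + 1, hk => by
    have hp : n - k = n - (k + 1) + 1 := by omega
    rw [darkAux, darkAux_rothe k (by omega), hp]
    exact darkStep_rothe_levelClouds w ⟨n - (k + 1), by omega⟩

theorem dark_rothe : dark (rothe w) = levelClouds w 0 := by
  rw [dark_eq_darkAux fun q => rothe_row_le w, darkAux_rothe w n le_rfl, Nat.sub_self]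

end Rothe

section Rajcode

variable {n : ℕ} (w : Equiv.Perm (Fin n))

theorem mem_snow_rothe_iff (r : Fin n) (c : ℕ) :
    ((r : ℕ) + 1, c) ∈ snow (rothe w) ↔
      ∃ j, r ≤ j ∧ ¬(IsLevelHead w r j ∧ w r ≤ w j) ∧ c = (w j : ℕ) + 1 := by
  have hsnow : ((r : ℕ) + 1, c) ∈ snow (rothe w) ↔
      ((r : ℕ) + 1, c) ∈ rothe w ∨ ∃ q ∈ levelClouds w r, q.2 = c := by
    simp only [snow, dark_rothe, mem_union, mem_biUnion, mem_image, mem_Icc, Prod.mk.injEq]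
    refine or_congr_right ⟨?_, ?_⟩
    · rintro ⟨_, hq, _, ⟨-, hrq⟩, rfl, rfl⟩
      obtain ⟨i, j, ⟨-, hl, hj⟩, rfl⟩ := (mem_levelClouds w).mp hq
      exact ⟨_, (mem_levelClouds w).mpr ⟨i, j, ⟨by omega, hl, hj⟩, rfl⟩, rfl⟩
    · rintro ⟨_, hq, rfl⟩
      obtain ⟨i, j, ⟨hri, hl, hj⟩, rfl⟩ := (mem_levelClouds w).mp hq
      exact ⟨_, (mem_levelClouds w).mpr ⟨i, j, ⟨Nat.zero_le _, hl, hj⟩, rfl⟩, _,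
        ⟨by omega, by dsimp only; omega⟩, rfl, rfl⟩
  rw [hsnow, mem_rothe_iff, exists_levelClouds_snd_iff]
  constructor
  · rintro (⟨j, hrj, hw, rfl⟩ | ⟨j, hrj, hj, rfl⟩)
    · exact ⟨j, hrj.le, fun h => h.2.not_gt hw, rfl⟩
    · exact ⟨j, Fin.le_def.mpr hrj, fun h => hj h.1, rfl⟩
  · rintro ⟨j, hrj, hj, rfl⟩
    by_cases hh : IsLevelHead w r j
    · have hw : w j < w r := lt_of_not_ge fun h => hj ⟨hh, h⟩
      exact Or.inl ⟨j, hrj.lt_of_ne (by rintro rfl; exact lt_irrefl _ hw), hw, rfl⟩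
    · exact Or.inr ⟨j, Fin.le_def.mp hrj, hh, rfl⟩

theorem snow_rothe_filter_row (r : Fin n) :
    (snow (rothe w)).filter (fun q => q.1 = (r : ℕ) + 1) =
      ((Ici r).filter fun j => ¬(IsLevelHead w r j ∧ w r ≤ w j)).image
        fun j => ((r : ℕ) + 1, (w j : ℕ) + 1) := by
  ext ⟨a, c⟩
  simp only [mem_filter, mem_image, mem_Ici, Prod.mk.injEq]
  constructor
  · rintro ⟨h, rfl⟩
    obtain ⟨j, hrj, hj, rfl⟩ := (mem_snow_rothe_iff w r c).mp h
    exact ⟨j, ⟨hrj, hj⟩, rfl, rfl⟩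
  · rintro ⟨j, ⟨hrj, hj⟩, rfl, rfl⟩
    exact ⟨(mem_snow_rothe_iff w r _).mpr ⟨j, hrj, hj, rfl⟩, rfl⟩

theorem card_filter_isLevelHead (r : Fin n) :
    ((Ici r).filter fun j => IsLevelHead w r j ∧ w r ≤ w j).card = LISfrom w r := by
  conv_rhs => rw [← Nat.add_sub_cancel (LISfrom w r) 1, ← Nat.card_Icc]
  refine card_bij (fun j _ => LISfrom w j) (fun j hj => ?_) (fun i hi j hj h => ?_) fun ℓ hℓ => ?_
  · obtain ⟨hrj, -, hw⟩ := mem_filter.mp hj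
    refine mem_Icc.mpr ⟨one_le_LISfrom w j, ?_⟩
    rcases (mem_Ici.mp hrj).eq_or_lt with rfl | hrj
    · exact le_rfl
    · exact (LISfrom_lt_of_lt hrj (hw.lt_of_ne (w.injective.ne hrj.ne))).le
  · exact (mem_filter.mp hi).2.1.eq_of_LISfrom_eq (mem_filter.mp hj).2.1 h
  · obtain ⟨hℓ1, hℓr⟩ := mem_Icc.mp hℓ
    obtain ⟨f, hf, hfl, hw⟩ := exists_isLevelHead le_rfl hℓ1 hℓr
    exact ⟨f, mem_filter.mpr ⟨mem_Ici.mpr (Fin.le_def.mpr hf.1), hf, hw⟩, hfl⟩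

end Rajcode

/-- `rajcode(RD(w))_r = n + 1 - r - LIS^w(w(r))` for `r ∈ [n]`
(here `r ∈ [n]` corresponds to `(r : Fin n)`, row `r+1` in 1-based terms). -/
theorem rajcodeD_rothe (n : ℕ) (w : Equiv.Perm (Fin n)) (r : Fin n) :
    (rajcodeD (rothe w) ((r : ℕ) + 1) : ℤ)
      = (n : ℤ) + 1 - ((r : ℕ) + 1) - LISfrom w r := by
  have hsplit := card_filter_add_card_filter_not (s := Ici r)
    (p := fun j => IsLevelHead w r j ∧ w r ≤ w j)
  rw [card_filter_isLevelHead, Fin.card_Ici] at hsplit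
  have hrow : rajcodeD (rothe w) ((r : ℕ) + 1) =
      ((Ici r).filter fun j => ¬(IsLevelHead w r j ∧ w r ≤ w j)).card := by
    rw [rajcodeD, snow_rothe_filter_row, card_image_of_injective]
    intro i j h
    exact w.injective (Fin.ext (by simpa using h))
  omega
end
end

section
/- Let w ∈ S_n be an inverse fireworks permutation and r ∈ [n] a row such that row r of RD(w) is nonempty. Then the rightmost cell in row r of RD(w) is (r, w(r)−1). -/
open scoped Classical

noncomputable section

/-
Write `u = w⁻¹`. A cell in row `r` of `RD(w)` is a later position `r'` with `w r' < w r`,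
so the rightmost cell can only sit in column `w r - 1`, and it does iff the value `w r - 1`
occurs after position `r`. If it occurred before `r`, then `w r` would start a decreasing run
of `u`. In a fireworks permutation every entry is smaller than the start of any later run
(it is at most the start of its own run), so `u (w r') < u (w r)`, i.e. `r' < r`: impossible.
-/

section Fireworks

variable {n : ℕ}

lemma exists_isRunStart_le_and_apply_le (u : Equiv.Perm (Fin n)) (v : Fin n) :
    ∃ i, IsRunStart u i ∧ i ≤ v ∧ u v ≤ u i := by
  induction v using WellFoundedLT.induction with
  | ind v ih =>
    by_cases hv : IsRunStart u v
    · exact ⟨v, hv, le_rfl, le_rfl⟩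
    · simp only [IsRunStart, not_forall, not_lt] at hv
      obtain ⟨j, hjv, hle⟩ := hv
      obtain ⟨i, hi, hij, hui⟩ := ih j (Fin.lt_def.mpr (by omega))
      exact ⟨i, hi, hij.trans (Fin.le_def.mpr (by omega)), hle.trans hui⟩

lemma Fireworks.apply_lt_of_isRunStart {u : Equiv.Perm (Fin n)} (hu : Fireworks u) {i v : Fin n}
    (hi : IsRunStart u i) (hvi : v < i) : u v < u i := by
  obtain ⟨i', hi', hi'v, hle⟩ := exists_isRunStart_le_and_apply_le u v
  exact hle.trans_lt (hu i' i hi' hi (hi'v.trans_lt hvi))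

end Fireworks

lemma mk_mem_rothe_iff {n : ℕ} (w : Equiv.Perm (Fin n)) (r : Fin n) (c : ℕ) :
    ((r : ℕ) + 1, c) ∈ rothe w ↔ ∃ r', r < r' ∧ w r' < w r ∧ (w r' : ℕ) + 1 = c := by
  simp only [rothe, Finset.mem_image, Finset.mem_filter, Finset.mem_univ, true_and,
    Prod.exists, Prod.mk.injEq, add_left_inj, Fin.val_inj]
  constructor
  · rintro ⟨a, r', ⟨har', hw'⟩, rfl, hc⟩
    exact ⟨r', har', hw', hc⟩
  · rintro ⟨r', hrr', hw', hc⟩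
    exact ⟨r, r', ⟨hrr', hw'⟩, rfl, hc⟩

lemma InverseFireworks.lt_symm_apply_of_val_add_one_eq {n : ℕ} {w : Equiv.Perm (Fin n)}
    (hw : InverseFireworks w) {r r' d : Fin n} (hrr' : r < r') (hw' : w r' < w r)
    (hd : (d : ℕ) + 1 = w r) : r < w.symm d := by
  by_contra! hle
  have hne : w.symm d ≠ r := fun h => by
    rw [Equiv.symm_apply_eq] at h
    omega
  have hstart : IsRunStart w⁻¹ (w r) := by
    intro j hj
    obtain rfl : j = d := Fin.ext (by omega)
    simpa using lt_of_le_of_ne hle hne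
  exact lt_asymm hrr' (by simpa using Fireworks.apply_lt_of_isRunStart hw hstart hw')

/-- In 1-based coordinates the column `w(r) - 1` of the paper is `(w r : ℕ)`. -/
theorem rothe_rightmost_of_inverseFireworks (n : ℕ) (w : Equiv.Perm (Fin n))
    (hw : InverseFireworks w) (r : Fin n) (hne : ∃ c, ((r : ℕ) + 1, c) ∈ rothe w) :
    ((r : ℕ) + 1, (w r : ℕ)) ∈ rothe w ∧
      ∀ c, ((r : ℕ) + 1, c) ∈ rothe w → c ≤ (w r : ℕ) := by
  obtain ⟨c, hc⟩ := hne
  obtain ⟨r', hrr', hw', -⟩ := (mk_mem_rothe_iff w r c).mp hc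
  have hpos : 0 < (w r : ℕ) := (Nat.zero_le _).trans_lt hw'
  set d : Fin n := ⟨(w r : ℕ) - 1, by omega⟩
  have hd : (d : ℕ) + 1 = w r := by simp only [d]; omega
  refine ⟨(mk_mem_rothe_iff w r _).mpr ⟨w.symm d, ?_, ?_, ?_⟩, ?_⟩
  · exact hw.lt_symm_apply_of_val_add_one_eq hrr' hw' hd
  · simpa using Fin.lt_def.mpr (by omega)
  · simp only [Equiv.apply_symm_apply, d]; omega
  · intro c' hc'
    obtain ⟨r'', -, hw'', rfl⟩ := (mk_mem_rothe_iff w r c').mp hc'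
    exact Fin.lt_def.mp hw''

end
end
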